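/- arXiv:2404.05564 — 4 statements merged into one kernel-verified Lean document; each statement's English description precedes it below -/
import Mathlib

section
/- Let N, n, m be natural numbers, A an n×N real matrix, b ∈ ℝ^n, C an m×N real matrix, and d ∈ ℝ^m. If x is an extreme point of the convex set P = {x ∈ ℝ^N : x ≥ 0 componentwise, A x = b, and C x ≤ d componentwise}, then the number of indices i with x_i ≠ 0 is at most n + m. -/
/-!
If the support `S` of `x` had more than `n + m` elements, the columns of `A` and `C` indexed by
`S` would be linearly dependent, giving a nonzero `u` supported in `S` with `A u = 0` and
`C u = 0`. As `x` is positive on `S`, both `x + t u` and `x - t u` lie in the polyhedron for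
small `t > 0`, and `x` is their midpoint.
-/

open Filter Topology Module Matrix

theorem LinearMap.exists_supported_ne_zero_map_eq_zero {K ι V : Type*} [Field K]
    [AddCommGroup V] [Module K V] [FiniteDimensional K V] (f : (ι → K) →ₗ[K] V) (s : Finset ι)
    (hs : finrank K V < s.card) : ∃ u ≠ 0, (∀ i ∉ s, u i = 0) ∧ f u = 0 := by
  let e := Function.ExtendByZero.linearMap K ((↑) : s → ι)
  have hker : LinearMap.ker (f ∘ₗ e) ≠ ⊥ :=
    LinearMap.ker_ne_bot_of_finrank_lt (by simpa using hs)
  obtain ⟨z, hz, hz0⟩ := (Submodule.ne_bot_iff _).mp hker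
  refine ⟨e z, fun h => ?_, fun i hi => ?_, hz⟩
  · exact hz0 (Function.extend_injective Subtype.val_injective (0 : ι → K)
      (h.trans (map_zero e).symm))
  · exact Function.extend_apply' _ _ _ (by simpa using hi)

theorem eventually_nonneg_add_smul {ι : Type*} [Finite ι] {x u : ι → ℝ} (hx : 0 ≤ x)
    (hu : ∀ i, x i = 0 → u i = 0) : ∀ᶠ t in 𝓝 (0 : ℝ), 0 ≤ x + t • u := by
  simp only [Pi.le_def, Pi.zero_apply, Pi.add_apply, Pi.smul_apply, smul_eq_mul]
  refine eventually_all.mpr fun i => ?_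
  rcases (hx i).eq_or_lt with hxi | hxi
  · simp [← hxi, hu i hxi.symm]
  · have : Tendsto (fun t : ℝ => x i + t * u i) (𝓝 0) (𝓝 (x i)) := by
      simpa using (Continuous.tendsto (by fun_prop) 0 : Tendsto (fun t : ℝ => x i + t * u i) _ _)
    exact (this.eventually (lt_mem_nhds hxi)).mono fun _ => le_of_lt

theorem Set.eq_zero_of_mem_extremePoints_of_add_mem_of_sub_mem {𝕜 E : Type*} [Field 𝕜]
    [LinearOrder 𝕜] [IsStrictOrderedRing 𝕜] [AddCommGroup E] [Module 𝕜 E] {P : Set E} {x u : E}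
    (hx : x ∈ P.extremePoints 𝕜) (hadd : x + u ∈ P) (hsub : x - u ∈ P) : u = 0 := by
  have hseg : x ∈ openSegment 𝕜 (x + u) (x - u) :=
    ⟨1 / 2, 1 / 2, by norm_num, by norm_num, by norm_num, by
      rw [smul_add, smul_sub, add_add_sub_cancel, ← add_smul]; norm_num⟩
  simpa using hx.2 hadd hsub hseg

/-- An extreme point of the polyhedron `{x ≥ 0, A x = b, C x ≤ d}` has at most
`n + m` nonzero coordinates. -/
theorem extreme_point_support_card_le
    (N n m : ℕ) (A : Matrix (Fin n) (Fin N) ℝ) (b : Fin n → ℝ)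
    (C : Matrix (Fin m) (Fin N) ℝ) (d : Fin m → ℝ)
    (x : Fin N → ℝ)
    (hx : x ∈ Set.extremePoints ℝ {y : Fin N → ℝ |
      (∀ i, 0 ≤ y i) ∧ A.mulVec y = b ∧ ∀ i, C.mulVec y i ≤ d i}) :
    (Finset.univ.filter (fun i => x i ≠ 0)).card ≤ n + m := by
  obtain ⟨hx0, hxA, hxC⟩ := hx.1
  by_contra! hcard
  obtain ⟨u, hu0, hsupp, hker⟩ :=
    (A.mulVecLin.prod C.mulVecLin).exists_supported_ne_zero_map_eq_zero _ (by simpa using hcard)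
  obtain ⟨huA, huC⟩ : A *ᵥ u = 0 ∧ C *ᵥ u = 0 := by simpa using hker
  have hpert : ∀ᶠ t in 𝓝[>] (0 : ℝ), 0 < t ∧ 0 ≤ x + t • u ∧ 0 ≤ x + (-t) • u := by
    have h := eventually_nonneg_add_smul hx0 (u := u) (by simpa using hsupp)
    exact eventually_mem_nhdsWithin.and <| nhdsWithin_le_nhds <|
      h.and ((continuous_neg.tendsto' 0 0 neg_zero).eventually h)
  obtain ⟨t, htpos, hplus, hminus⟩ := hpert.exists
  have hmem (s : ℝ) (hs : 0 ≤ x + s • u) : x + s • u ∈ {y : Fin N → ℝ |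
      (∀ i, 0 ≤ y i) ∧ A.mulVec y = b ∧ ∀ i, C.mulVec y i ≤ d i} :=
    ⟨hs, by simp [mulVec_add, mulVec_smul, huA, hxA],
      by simpa [mulVec_add, mulVec_smul, huC] using hxC⟩
  have htu := Set.eq_zero_of_mem_extremePoints_of_add_mem_of_sub_mem hx (hmem t hplus)
    (by simpa [sub_eq_add_neg] using hmem (-t) hminus)
  exact hu0 ((smul_eq_zero.mp htu).resolve_left htpos.ne')
end

section
/- Let Λ > 0 and μ > 0 be real numbers and x a natural number. For 0 ≤ u ≤ x define p̂(u; x) = Λ · ∫_0^∞ (x choose u) · exp(−μ t (x − u)) · (1 − exp(−μ t))^u · exp(−Λ t) dt. Then each p̂(u; x) is nonnegative and ∑_{u=0}^{x} p̂(u; x) = 1; that is, p̂(·; x) is a probability distribution on {0, 1, …, x}. -/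
/-!
Conditionally on the inter-arrival time `t`, each of the `x` flows has left independently with
probability `p = 1 - exp (-μ t)`, so the integrand of `p̂(u; x)` is the Bernstein weight
`C(x,u) p^u (1-p)^(x-u)` times `exp (-Λ t)`. The weights are nonnegative and sum to one for
`p ∈ [0, 1]`, so summing over `u` leaves `Λ ∫₀^∞ exp (-Λ t) dt = 1`.
-/

open Real MeasureTheory Polynomial

namespace bernsteinPolynomial

variable {R : Type*} [CommRing R]

theorem sum_eval (n : ℕ) (p : R) :
    ∑ ν ∈ Finset.range (n + 1), (bernsteinPolynomial R n ν).eval p = 1 := by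
  rw [← eval_finsetSum, bernsteinPolynomial.sum, eval_one]

theorem eval_nonneg (n ν : ℕ) {p : ℝ} (hp : p ∈ Set.Icc 0 1) :
    0 ≤ (bernsteinPolynomial ℝ n ν).eval p := by
  have : 0 ≤ 1 - p := sub_nonneg.2 hp.2
  simp only [bernsteinPolynomial, eval_mul, eval_pow, eval_sub, eval_one, eval_X, eval_natCast]
  exact mul_nonneg (mul_nonneg (Nat.cast_nonneg _) (pow_nonneg hp.1 _)) (pow_nonneg this _)

end bernsteinPolynomial

theorem Real.exp_mul_natCast_sub {x u : ℕ} (a : ℝ) (hu : u ≤ x) :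
    exp (a * ((x : ℝ) - u)) = exp a ^ (x - u) := by
  rw [← Real.exp_nat_mul, Nat.cast_sub hu, mul_comm]

theorem choose_mul_exp_mul_sub_mul_pow_eq_eval_bernsteinPolynomial (a : ℝ) (x u : ℕ) :
    (x.choose u : ℝ) * exp (a * ((x : ℝ) - u)) * (1 - exp a) ^ u =
      (bernsteinPolynomial ℝ x u).eval (1 - exp a) := by
  rcases le_or_gt u x with hu | hu
  · simp only [bernsteinPolynomial, eval_mul, eval_pow, eval_sub, eval_one, eval_X,
      eval_natCast, sub_sub_cancel, Real.exp_mul_natCast_sub a hu]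
    ring
  · simp [Nat.choose_eq_zero_of_lt hu, bernsteinPolynomial.eq_zero_of_lt ℝ hu]

theorem one_sub_exp_neg_mul_mem_Icc {μ t : ℝ} (hμ : 0 ≤ μ) (ht : 0 ≤ t) :
    1 - exp (-μ * t) ∈ Set.Icc 0 1 := by
  have hle : exp (-μ * t) ≤ 1 := exp_le_one_iff.2 (by nlinarith)
  exact ⟨sub_nonneg.2 hle, sub_le_self _ (exp_pos _).le⟩

theorem sum_integral_mul_eq_integral_of_sum_eq_one {α ι : Type*} [MeasurableSpace α]
    {μ : Measure α} (s : Finset ι) {w : ι → α → ℝ} {g : α → ℝ} (hg : Integrable g μ)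
    (hw : ∀ i ∈ s, AEStronglyMeasurable (w i) μ)
    (hw_nonneg : ∀ᵐ a ∂μ, ∀ i ∈ s, 0 ≤ w i a) (hw_sum : ∀ᵐ a ∂μ, ∑ i ∈ s, w i a = 1) :
    ∑ i ∈ s, ∫ a, w i a * g a ∂μ = ∫ a, g a ∂μ := by
  have hw_le_one : ∀ i ∈ s, ∀ᵐ a ∂μ, ‖w i a‖ ≤ 1 := fun i hi ↦ by
    filter_upwards [hw_nonneg, hw_sum] with a hnonneg hsum
    rw [Real.norm_of_nonneg (hnonneg i hi), ← hsum]
    exact Finset.single_le_sum hnonneg hi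
  rw [← integral_finsetSum s fun i hi ↦ hg.bdd_mul (hw i hi) (hw_le_one i hi)]
  refine integral_congr_ae ?_
  filter_upwards [hw_sum] with a hsum
  rw [← Finset.sum_mul, hsum, one_mul]

/-- The inter-arrival departure probabilities
`p̂(u; x) = Λ ∫₀^∞ C(x,u) e^{-μt(x-u)} (1-e^{-μt})^u e^{-Λt} dt`
are nonnegative and sum to one over `u ∈ {0, …, x}`. -/
theorem departure_probabilities_form_distribution
    (Λ μ : ℝ) (hΛ : 0 < Λ) (hμ : 0 < μ) (x : ℕ) :
    (∀ u : ℕ, u ≤ x →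
      0 ≤ Λ * ∫ t in Set.Ioi (0 : ℝ),
        (x.choose u : ℝ) * Real.exp (-μ * t * ((x : ℝ) - u)) *
          (1 - Real.exp (-μ * t)) ^ u * Real.exp (-Λ * t)) ∧
    ∑ u ∈ Finset.range (x + 1),
      Λ * ∫ t in Set.Ioi (0 : ℝ),
        (x.choose u : ℝ) * Real.exp (-μ * t * ((x : ℝ) - u)) *
          (1 - Real.exp (-μ * t)) ^ u * Real.exp (-Λ * t) = 1 := by
  simp_rw [choose_mul_exp_mul_sub_mul_pow_eq_eval_bernsteinPolynomial]
  have hp : ∀ᵐ t ∂volume.restrict (Set.Ioi (0 : ℝ)), 1 - exp (-μ * t) ∈ Set.Icc 0 1 := by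
    filter_upwards [ae_restrict_mem measurableSet_Ioi] with t ht
    exact one_sub_exp_neg_mul_mem_Icc hμ.le (le_of_lt ht)
  refine ⟨fun u _ ↦ mul_nonneg hΛ.le (integral_nonneg_of_ae ?_), ?_⟩
  · filter_upwards [hp] with t ht
    exact mul_nonneg (bernsteinPolynomial.eval_nonneg x u ht) (exp_pos _).le
  rw [← Finset.mul_sum, sum_integral_mul_eq_integral_of_sum_eq_one _
      (exp_neg_integrableOn_Ioi 0 hΛ) (fun u _ ↦ by fun_prop)
      (by filter_upwards [hp] with t ht u _ using bernsteinPolynomial.eval_nonneg x u ht)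
      (ae_of_all _ fun t ↦ bernsteinPolynomial.sum_eval x _),
    integral_exp_mul_Ioi (neg_lt_zero.2 hΛ), mul_zero, exp_zero]
  field_simp
end

section
/- Let Λ > 0 and μ > 0 be real numbers and x, u natural numbers with u ≤ x. Then Λ · ∫_0^∞ (x choose u) · exp(−μ t (x − u)) · (1 − exp(−μ t))^u · exp(−Λ t) dt = (Λ/μ) · (x choose u) · Γ(x − u + Λ/μ) · Γ(u + 1) / Γ(x + 1 + Λ/μ), where Γ is the real Gamma function. Equivalently, the inter-arrival departure probability p̂(u; x) equals (Λ/μ)·(x choose u)·B(x − u + Λ/μ, u + 1) with B the Beta function. -/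
/-!
After the substitution `s = μ t` the integral becomes `∫₀^∞ e^{-b s} (1 - e^{-s})^u ds` with
`b = x - u + Λ/μ`, which is the Beta integral `B(b, u + 1)` in the variable `r = e^{-s}`.
Instead of changing variables we evaluate it through the recursion
`I_{n+1}(b) = (n + 1)/b · I_n(b + 1)`, obtained by integrating the derivative of
`e^{-b s} (1 - e^{-s})^{n+1}` (which vanishes at both ends); it is the recursion satisfied by
`Γ(b) Γ(n + 1) / Γ(b + n + 1)`.
-/

open Real MeasureTheory Set Filter Topology

lemma exp_neg_mul_one_sub_exp_neg_pow_mem_Icc (b : ℝ) {t : ℝ} (ht : 0 ≤ t) (n : ℕ) :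
    exp (-b * t) * (1 - exp (-t)) ^ n ∈ Icc 0 (exp (-b * t)) := by
  have h₀ : 0 ≤ 1 - exp (-t) := by simp [exp_le_one_iff, ht]
  have h₁ : 1 - exp (-t) ≤ 1 := by linarith [exp_pos (-t)]
  exact ⟨by positivity, mul_le_of_le_one_right (exp_pos _).le (pow_le_one₀ h₀ h₁)⟩

lemma integrableOn_exp_neg_mul_one_sub_exp_neg_pow {b : ℝ} (hb : 0 < b) (n : ℕ) :
    IntegrableOn (fun t ↦ exp (-b * t) * (1 - exp (-t)) ^ n) (Ioi 0) := by
  refine (exp_neg_integrableOn_Ioi 0 hb).mono' (by fun_prop) ?_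
  filter_upwards [ae_restrict_mem measurableSet_Ioi] with t ht
  obtain ⟨h₀, h₁⟩ := exp_neg_mul_one_sub_exp_neg_pow_mem_Icc b (le_of_lt ht) n
  rwa [Real.norm_of_nonneg h₀]

lemma tendsto_exp_neg_mul_one_sub_exp_neg_pow {b : ℝ} (hb : 0 < b) (n : ℕ) :
    Tendsto (fun t ↦ exp (-b * t) * (1 - exp (-t)) ^ n) atTop (𝓝 0) := by
  have hexp : Tendsto (fun t ↦ exp (-b * t)) atTop (𝓝 0) :=
    tendsto_exp_atBot.comp (tendsto_id.const_mul_atTop_of_neg (neg_neg_iff_pos.2 hb))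
  refine squeeze_zero' ?_ ?_ hexp <;>
    filter_upwards [eventually_ge_atTop 0] with t ht
  exacts [(exp_neg_mul_one_sub_exp_neg_pow_mem_Icc b ht n).1,
    (exp_neg_mul_one_sub_exp_neg_pow_mem_Icc b ht n).2]

lemma hasDerivAt_exp_neg_mul_one_sub_exp_neg_pow_succ (b t : ℝ) (n : ℕ) :
    HasDerivAt (fun t ↦ exp (-b * t) * (1 - exp (-t)) ^ (n + 1))
      (-b * (exp (-b * t) * (1 - exp (-t)) ^ (n + 1)) +
        (n + 1) * (exp (-(b + 1) * t) * (1 - exp (-t)) ^ n)) t := by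
  have hexp : HasDerivAt (fun t ↦ exp (-b * t)) (-b * exp (-b * t)) t := by
    simpa [mul_comm] using ((hasDerivAt_id t).const_mul (-b)).exp
  have hpow : HasDerivAt (fun t ↦ (1 - exp (-t)) ^ (n + 1))
      ((n + 1) * (1 - exp (-t)) ^ n * exp (-t)) t := by
    refine (((hasDerivAt_neg t).exp.const_sub 1).pow (n + 1)).congr_deriv ?_
    push_cast
    ring
  refine (hexp.mul hpow).congr_deriv ?_
  rw [show -(b + 1) * t = -b * t + -t by ring, exp_add]
  ring

lemma integral_exp_neg_mul_one_sub_exp_neg_pow_succ {b : ℝ} (hb : 0 < b) (n : ℕ) :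
    ∫ t in Ioi 0, exp (-b * t) * (1 - exp (-t)) ^ (n + 1) =
      (n + 1) / b * ∫ t in Ioi 0, exp (-(b + 1) * t) * (1 - exp (-t)) ^ n := by
  have hI := integrableOn_exp_neg_mul_one_sub_exp_neg_pow hb (n + 1)
  have hJ := integrableOn_exp_neg_mul_one_sub_exp_neg_pow (by linarith : 0 < b + 1) n
  have hFTC := integral_Ioi_of_hasDerivAt_of_tendsto'
    (fun t _ ↦ hasDerivAt_exp_neg_mul_one_sub_exp_neg_pow_succ b t n)
    ((hI.const_mul (-b)).add (hJ.const_mul ((n : ℝ) + 1)))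
    (tendsto_exp_neg_mul_one_sub_exp_neg_pow hb (n + 1))
  rw [integral_add (hI.const_mul _) (hJ.const_mul _), integral_const_mul,
    integral_const_mul] at hFTC
  simp only [mul_zero, exp_zero, sub_self, neg_zero, zero_pow n.succ_ne_zero] at hFTC
  rw [div_mul_eq_mul_div, eq_div_iff hb.ne']
  linarith

theorem integral_exp_neg_mul_one_sub_exp_neg_pow {b : ℝ} (hb : 0 < b) (n : ℕ) :
    ∫ t in Ioi 0, exp (-b * t) * (1 - exp (-t)) ^ n =
      Gamma b * Gamma (n + 1) / Gamma (b + n + 1) := by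
  induction n generalizing b with
  | zero =>
    simp only [pow_zero, mul_one, integral_exp_mul_Ioi (neg_neg_iff_pos.2 hb), CharP.cast_eq_zero,
      zero_add, Gamma_one, add_zero, Gamma_add_one hb.ne']
    field_simp [(Gamma_pos_of_pos hb).ne']
    simp
  | succ n ih =>
    rw [integral_exp_neg_mul_one_sub_exp_neg_pow_succ hb, ih (by linarith), Gamma_add_one hb.ne',
      Nat.cast_succ, Gamma_add_one (by positivity : (n : ℝ) + 1 ≠ 0),
      show b + 1 + n + 1 = b + (n + 1) + 1 by ring]
    field_simp

/-- Closed form of the inter-arrival departure probability: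
`p̂(u;x) = (Λ/μ)·C(x,u)·Γ(x-u+Λ/μ)·Γ(u+1)/Γ(x+1+Λ/μ)`, i.e.
`(Λ/μ)·C(x,u)·B(x-u+Λ/μ, u+1)`. -/
theorem departure_probability_gamma_form
    (Λ μ : ℝ) (hΛ : 0 < Λ) (hμ : 0 < μ) (x u : ℕ) (hu : u ≤ x) :
    Λ * ∫ t in Set.Ioi (0 : ℝ),
        (x.choose u : ℝ) * Real.exp (-μ * t * ((x : ℝ) - u)) *
          (1 - Real.exp (-μ * t)) ^ u * Real.exp (-Λ * t)
      = (Λ / μ) * (x.choose u : ℝ) *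
          Real.Gamma ((x : ℝ) - u + Λ / μ) * Real.Gamma ((u : ℝ) + 1) /
          Real.Gamma ((x : ℝ) + 1 + Λ / μ) := by
  set b := (x : ℝ) - u + Λ / μ
  have hb : 0 < b := by
    have : (u : ℝ) ≤ x := by exact_mod_cast hu
    have : 0 < Λ / μ := div_pos hΛ hμ
    linarith
  have hintegrand : ∀ t : ℝ, (x.choose u : ℝ) * exp (-μ * t * ((x : ℝ) - u)) *
      (1 - exp (-μ * t)) ^ u * exp (-Λ * t) =
        x.choose u * (exp (-b * (μ * t)) * (1 - exp (-(μ * t))) ^ u) := by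
    intro t
    have hexponent : -b * (μ * t) = -μ * t * ((x : ℝ) - u) + -Λ * t := by
      simp only [b]
      field_simp
      ring
    rw [hexponent, exp_add, ← neg_mul]
    ring
  simp_rw [hintegrand, integral_const_mul,
    integral_comp_mul_left_Ioi (fun s ↦ exp (-b * s) * (1 - exp (-s)) ^ u) 0 hμ, mul_zero,
    smul_eq_mul, integral_exp_neg_mul_one_sub_exp_neg_pow hb u,
    show b + u + 1 = (x : ℝ) + 1 + Λ / μ by ring]
  field_simp
end

section
/- Let S and A be nonempty finite types, r : S × A → ℝ, γ a real number with 0 ≤ γ < 1, and p : S × A → S → ℝ a probability kernel (p (s,a) s' ≥ 0 and ∑_{s'} p (s,a) s' = 1). Then there exists a unique function Q* : S × A → ℝ satisfying the Bellman optimality equation Q*(s, a) = r (s, a) + γ * ∑_{s'} p (s, a) s' * (max_{a'} Q* (s', a')) for all (s, a). -/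
open scoped NNReal

private lemma ciSup_dist_le {A : Type*} [Fintype A] [Nonempty A]
    (f g : A → ℝ) (c : ℝ) (h : ∀ a, |f a - g a| ≤ c) :
    |(⨆ a, f a) - ⨆ a, g a| ≤ c := by
  have hf : BddAbove (Set.range f) := Set.Finite.bddAbove (Set.finite_range f)
  have hg : BddAbove (Set.range g) := Set.Finite.bddAbove (Set.finite_range g)
  rw [abs_sub_le_iff]
  constructor
  · rw [sub_le_iff_le_add]
    refine ciSup_le fun a => ?_
    have h1 := (abs_sub_le_iff.1 (h a)).1
    have h2 := le_ciSup hg a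
    linarith
  · rw [sub_le_iff_le_add]
    refine ciSup_le fun a => ?_
    have h1 := (abs_sub_le_iff.1 (h a)).2
    have h2 := le_ciSup hf a
    linarith

/-- Existence and uniqueness of the optimal Q-function, solution of the
Bellman optimality equation. -/
theorem bellman_optimality_unique_fixed_point
    (S A : Type*) [Fintype S] [Nonempty S] [Fintype A] [Nonempty A]
    (r : S × A → ℝ) (γ : ℝ) (hγ0 : 0 ≤ γ) (hγ1 : γ < 1)
    (p : S × A → S → ℝ) (hp0 : ∀ sa s', 0 ≤ p sa s')
    (hp1 : ∀ sa, ∑ s', p sa s' = 1) :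
    ∃! Q : S × A → ℝ, ∀ sa : S × A,
      Q sa = r sa + γ * ∑ s', p sa s' * ⨆ a', Q (s', a') := by
  set T : (S × A → ℝ) → (S × A → ℝ) :=
    fun Q sa => r sa + γ * ∑ s', p sa s' * ⨆ a', Q (s', a') with hT
  set K : ℝ≥0 := ⟨γ, hγ0⟩ with hK
  have hlip : LipschitzWith K T := by
    refine LipschitzWith.of_dist_le_mul fun Q Q' => ?_
    refine (dist_pi_le_iff (by positivity)).2 fun sa => ?_
    simp only [hT, Real.dist_eq]
    have key : ∀ s', |(⨆ a', Q (s', a')) - ⨆ a', Q' (s', a')| ≤ dist Q Q' := by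
      intro s'
      refine ciSup_dist_le _ _ _ fun a => ?_
      have := dist_le_pi_dist Q Q' (s', a)
      simpa [Real.dist_eq] using this
    calc |(r sa + γ * ∑ s', p sa s' * ⨆ a', Q (s', a')) -
          (r sa + γ * ∑ s', p sa s' * ⨆ a', Q' (s', a'))|
        = γ * |∑ s', p sa s' * ((⨆ a', Q (s', a')) - ⨆ a', Q' (s', a'))| := by
          have hXY : (∑ s', p sa s' * ⨆ a', Q (s', a')) -
              (∑ s', p sa s' * ⨆ a', Q' (s', a')) =
              ∑ s', p sa s' * ((⨆ a', Q (s', a')) - ⨆ a', Q' (s', a')) := by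
            rw [← Finset.sum_sub_distrib]
            exact Finset.sum_congr rfl fun s' _ => (mul_sub _ _ _).symm
          rw [← hXY, show (r sa + γ * ∑ s', p sa s' * ⨆ a', Q (s', a')) -
              (r sa + γ * ∑ s', p sa s' * ⨆ a', Q' (s', a')) =
              γ * ((∑ s', p sa s' * ⨆ a', Q (s', a')) -
                ∑ s', p sa s' * ⨆ a', Q' (s', a')) by ring,
            abs_mul, abs_of_nonneg hγ0]
      _ ≤ γ * ∑ s', p sa s' * dist Q Q' := by
          refine mul_le_mul_of_nonneg_left ?_ hγ0
          refine (Finset.abs_sum_le_sum_abs _ _).trans ?_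
          refine Finset.sum_le_sum fun s' _ => ?_
          rw [abs_mul, abs_of_nonneg (hp0 sa s')]
          exact mul_le_mul_of_nonneg_left (key s') (hp0 sa s')
      _ = γ * dist Q Q' := by rw [← Finset.sum_mul, hp1, one_mul]
      _ = (K : ℝ) * dist Q Q' := rfl
  have hcontr : ContractingWith K T := ⟨by exact_mod_cast hγ1, hlip⟩
  refine ⟨hcontr.fixedPoint T, ?_, ?_⟩
  · intro sa
    exact (congrFun hcontr.fixedPoint_isFixedPt sa).symm
  · intro Q hQ
    exact hcontr.fixedPoint_unique (funext fun sa => (hQ sa).symm)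
end
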